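/- Let σ ∈ {1,−1} and let q_1,…,q_n be a positive elliptic (σ=1) or negative elliptic (σ=−1) rotopulsator of the curved n-body problem for which the third coordinates q_{i3} = z₁ and the fourth coordinates q_{i4} = z₂ are independent of i for all i ∈ {1,…,n} (so that in particular the functions r_i are all equal to one common function r). If r is not a constant function, then the point masses form a regular polygon, i.e., α_j − α_i = (2π/n)(j − i) for all i,j ∈ {1,…,n}, and all masses are equal: m_1 = m_2 = … = m_n. -/

import Mathlib

/-!
Projecting the equation of motion of body `i` onto the radial and tangential directions of its
orbit gives two identities whose left-hand sides involve only `r, θ, z₁, z₂`, hence do not depend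
on `i`, while the right-hand sides are sums `∑_j c_ij (2 - σ r² u_ij)^(-3/2)` with
`u_ij = 1 - cos (α_j - α_i)`. As `r` is not constant, `r²` sweeps an interval, on which the
functions `ξ ↦ (2 - ξ w)^(-3/2)` with distinct `w` are linearly independent; so the coefficients
grouped by the value of `u_ij` agree for all `i`. Separating the two signs of `sin (α_j - α_i)`,
the total mass at angular offset `d ≠ 0` from body `i` is the same for every `i`. Hence the angles
are closed under their own differences, which therefore form a subgroup of order `n` of the
circle: a regular polygon. Finally, the offset `x_j - x_i` is realised from `i` only by `j`, and
from the body `b` with `x_i - x_b = x_j - x_i` only by `i`, so `m_j = m_i`.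
-/

open Real Finset

/-- The "curved inner product" `x ⊙ y = x₁y₁ + x₂y₂ + x₃y₃ + σx₄y₄` on `ℝ⁴`. -/
noncomputable def odot (σ : ℝ) (x y : Fin 4 → ℝ) : ℝ :=
  x 0 * y 0 + x 1 * y 1 + x 2 * y 2 + σ * x 3 * y 3

theorem hasDerivAt_sub_mul_rpow_neg (κ w e : ℝ) {ξ : ℝ} (h : 0 < κ - ξ * w) :
    HasDerivAt (fun x => (κ - x * w) ^ (-e)) (e * w * (κ - ξ * w) ^ (-e - 1)) ξ := by
  convert (((hasDerivAt_id' ξ).mul_const w).const_sub κ).rpow_const (p := -e) (Or.inl h.ne')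
    using 1
  ring_nf

theorem eq_zero_of_sum_mul_sub_mul_rpow_neg_eq_zero {s : Set ℝ} (hs : IsOpen s)
    (hne : s.Nonempty) {κ : ℝ} (hκ : κ ≠ 0) (U : Finset ℝ) (c : ℝ → ℝ) {e : ℝ} (he : 0 < e)
    (hpos : ∀ v ∈ U, ∀ ξ ∈ s, 0 < κ - ξ * v)
    (hsum : ∀ ξ ∈ s, ∑ v ∈ U, c v * (κ - ξ * v) ^ (-e) = 0) :
    ∀ v ∈ U, c v = 0 := by
  induction U using Finset.induction_on generalizing c e with
  | empty => simp
  | insert v U hv ih =>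
    have hderiv : ∀ ξ ∈ s, ∑ w ∈ insert v U, c w * (e * w * (κ - ξ * w) ^ (-e - 1)) = 0 := by
      intro ξ hξ
      have hF := HasDerivAt.fun_sum fun w hw =>
        (hasDerivAt_sub_mul_rpow_neg κ w e (hpos w hw ξ hξ)).const_mul (c w)
      exact hF.unique ((hasDerivAt_const ξ 0).congr_of_eventuallyEq
        (Filter.eventuallyEq_of_mem (hs.mem_nhds hξ) hsum))
    -- `(κ - ξ v)` times the derivative minus `e v` times the sum kills the `v`-term and lowers
    -- the exponent to `-(e + 1)`
    have helim : ∀ ξ ∈ s, ∑ w ∈ U, (e * κ * (w - v) * c w) * (κ - ξ * w) ^ (-(e + 1)) = 0 := by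
      intro ξ hξ
      have hterm : ∀ w ∈ insert v U, e * κ * (w - v) * c w * (κ - ξ * w) ^ (-(e + 1)) =
          (κ - ξ * v) * (c w * (e * w * (κ - ξ * w) ^ (-e - 1))) -
            e * v * (c w * (κ - ξ * w) ^ (-e)) := by
        intro w hw
        rw [show -e = -(e + 1) + 1 by ring, rpow_add (hpos w hw ξ hξ), rpow_one,
          show -(e + 1) + 1 - 1 = -(e + 1) by ring]
        ring
      have h := sum_congr rfl hterm
      rw [sum_sub_distrib, ← mul_sum, ← mul_sum, hderiv ξ hξ, hsum ξ hξ, sum_insert hv] at h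
      simpa using h
    have hU : ∀ w ∈ U, c w = 0 := by
      intro w hw
      have hwv : w - v ≠ 0 := sub_ne_zero.mpr (ne_of_mem_of_not_mem hw hv)
      have := ih (fun w => e * κ * (w - v) * c w) (by linarith)
        (fun w hw => hpos w (mem_insert_of_mem hw)) helim w hw
      simpa [he.ne', hκ, hwv] using this
    obtain ⟨ξ, hξ⟩ := hne
    have hv0 : c v * (κ - ξ * v) ^ (-e) = 0 := by
      have hrest : ∑ w ∈ U, c w * (κ - ξ * w) ^ (-e) = 0 :=
        sum_eq_zero fun w hw => by rw [hU w hw, zero_mul]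
      rw [← hsum ξ hξ, sum_insert hv, hrest, add_zero]
    intro w hw
    rcases mem_insert.mp hw with rfl | hw
    · exact (mul_eq_zero.mp hv0).resolve_right
        (rpow_pos_of_pos (hpos w (mem_insert_self w U) ξ hξ) _).ne'
    · exact hU w hw

theorem sum_filter_eq_of_sum_mul_sub_mul_rpow_neg_eq {ι : Type*} {s : Set ℝ} (hs : IsOpen s)
    (hne : s.Nonempty) {κ : ℝ} (hκ : κ ≠ 0) {e : ℝ} (he : 0 < e) (A B : Finset ι)
    (w w' c c' : ι → ℝ) (hA : ∀ j ∈ A, ∀ ξ ∈ s, 0 < κ - ξ * w j)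
    (hB : ∀ j ∈ B, ∀ ξ ∈ s, 0 < κ - ξ * w' j)
    (h : ∀ ξ ∈ s, ∑ j ∈ A, c j * (κ - ξ * w j) ^ (-e) = ∑ j ∈ B, c' j * (κ - ξ * w' j) ^ (-e))
    (v : ℝ) :
    ∑ j ∈ A with w j = v, c j = ∑ j ∈ B with w' j = v, c' j := by
  set U := A.image w ∪ B.image w'
  have hfiber : ∀ (C : Finset ι) (w c : ι → ℝ), C.image w ⊆ U → ∀ ξ,
      ∑ v ∈ U, (∑ j ∈ C with w j = v, c j) * (κ - ξ * v) ^ (-e) =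
        ∑ j ∈ C, c j * (κ - ξ * w j) ^ (-e) := by
    intro C w c hC ξ
    rw [← sum_fiberwise_of_maps_to fun j hj => hC (mem_image_of_mem w hj)]
    refine sum_congr rfl fun v _ => ?_
    rw [sum_mul]
    exact sum_congr rfl fun j hj => by rw [(mem_filter.mp hj).2]
  have hzero := eq_zero_of_sum_mul_sub_mul_rpow_neg_eq_zero hs hne hκ U
    (fun v => ∑ j ∈ A with w j = v, c j - ∑ j ∈ B with w' j = v, c' j) he
    (by
      simp only [U, mem_union, mem_image]
      rintro _ (⟨j, hj, rfl⟩ | ⟨j, hj, rfl⟩)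
      exacts [hA j hj, hB j hj])
    (fun ξ hξ => by
      simp only [sub_mul, sum_sub_distrib]
      rw [hfiber A w c subset_union_left, hfiber B w' c' subset_union_right, h ξ hξ, sub_self])
  by_cases hv : v ∈ U
  · exact sub_eq_zero.mp (hzero v hv)
  · have hempty : ∀ (C : Finset ι) (w : ι → ℝ), C.image w ⊆ U → {j ∈ C | w j = v} = ∅ :=
      fun C w hC => filter_eq_empty_iff.mpr fun j hj hjv =>
        hv (hC (hjv ▸ mem_image_of_mem w hj))
    rw [hempty A w subset_union_left, hempty B w' subset_union_right, sum_empty, sum_empty]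

theorem exists_Ioo_subset_range_notMem {f : ℝ → ℝ} (hf : Continuous f) {t₀ t₁ : ℝ}
    (h : f t₀ ≠ f t₁) (p : ℝ) :
    ∃ a b, a < b ∧ Set.Ioo a b ⊆ Set.range f ∧ p ∉ Set.Ioo a b := by
  wlog hlt : f t₀ < f t₁ generalizing t₀ t₁
  · exact this h.symm (lt_of_le_of_ne (not_lt.mp hlt) h.symm)
  have hsub := intermediate_value_univ t₀ t₁ hf
  obtain ⟨c, hc₀, hc₁⟩ := exists_between hlt
  rcases le_or_gt p c with hp | hp
  · exact ⟨c, f t₁, hc₁, fun ξ hξ => hsub ⟨by linarith [hξ.1], hξ.2.le⟩,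
      fun hp' => by linarith [hp'.1]⟩
  · exact ⟨f t₀, c, hc₀, fun ξ hξ => hsub ⟨hξ.1.le, by linarith [hξ.2]⟩,
      fun hp' => by linarith [hp'.2]⟩

open scoped Classical in
theorem sum_filter_cos_eq_of_ne_neg {ι : Type*} (A : Finset ι) (y : ι → Angle) (m : ι → ℝ)
    {d : Angle} (hd : d ≠ -d) :
    ∑ j ∈ A with (y j).cos = d.cos, m j =
        ∑ j ∈ A with y j = d, m j + ∑ j ∈ A with y j = -d, m j ∧
      ∑ j ∈ A with (y j).cos = d.cos, m j * (y j).sin =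
        d.sin * (∑ j ∈ A with y j = d, m j - ∑ j ∈ A with y j = -d, m j) := by
  have hpos : {j ∈ {j ∈ A | (y j).cos = d.cos} | y j = d} = {j ∈ A | y j = d} := by
    rw [filter_filter]
    exact filter_congr fun j _ => ⟨fun h => h.2, fun h => ⟨by rw [h], h⟩⟩
  have hneg : {j ∈ {j ∈ A | (y j).cos = d.cos} | ¬y j = d} = {j ∈ A | y j = -d} := by
    rw [filter_filter]
    refine filter_congr fun j _ => ?_
    rw [Angle.cos_eq_iff_eq_or_eq_neg]
    constructor
    · rintro ⟨h | h, h'⟩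
      exacts [absurd h h', h]
    · rintro h
      exact ⟨Or.inr h, fun h' => hd (h'.symm.trans h)⟩
  have hm := sum_filter_add_sum_filter_not {j ∈ A | (y j).cos = d.cos} (fun j => y j = d) m
  have hms := sum_filter_add_sum_filter_not {j ∈ A | (y j).cos = d.cos} (fun j => y j = d)
    fun j => m j * (y j).sin
  rw [hpos, hneg] at hm hms
  refine ⟨hm.symm, ?_⟩
  rw [← hms, mul_sub, mul_sum, mul_sum, sub_eq_add_neg, ← sum_neg_distrib]
  congr 1 <;> refine sum_congr rfl fun j hj => ?_ <;> rw [(mem_filter.mp hj).2]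
  · ring
  · rw [Angle.sin_neg]; ring

open scoped Classical in
theorem sum_filter_eq_of_sum_filter_cos_eq {ι : Type*} {A B : Finset ι} {y y' : ι → Angle}
    {m m' : ι → ℝ} {d : Angle}
    (hcos : ∑ j ∈ A with (y j).cos = d.cos, m j = ∑ j ∈ B with (y' j).cos = d.cos, m' j)
    (hsin : ∑ j ∈ A with (y j).cos = d.cos, m j * (y j).sin =
      ∑ j ∈ B with (y' j).cos = d.cos, m' j * (y' j).sin) :
    ∑ j ∈ A with y j = d, m j = ∑ j ∈ B with y' j = d, m' j := by
  by_cases hd : d = -d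
  · have hfiber : ∀ (A : Finset ι) (y : ι → Angle),
        {j ∈ A | (y j).cos = d.cos} = {j ∈ A | y j = d} := fun A y =>
      filter_congr fun j _ => by rw [Angle.cos_eq_iff_eq_or_eq_neg, ← hd, or_self]
    rwa [hfiber, hfiber] at hcos
  · have hsin_ne : d.sin ≠ 0 := by rwa [Ne, Angle.sin_eq_zero_iff, ← Angle.eq_neg_self_iff]
    obtain ⟨h₁, h₂⟩ := sum_filter_cos_eq_of_ne_neg A y m hd
    obtain ⟨h₁', h₂'⟩ := sum_filter_cos_eq_of_ne_neg B y' m' hd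
    rw [h₁, h₁'] at hcos
    rw [h₂, h₂'] at hsin
    have := mul_left_cancel₀ hsin_ne hsin
    linarith

open scoped Classical in
theorem sum_filter_coe_sub_eq_of_sum_filter_cos_eq {ι : Type*} [Fintype ι] [DecidableEq ι]
    {m α : ι → ℝ}
    (hrad : ∀ v, 0 < v → ∀ i i', ∑ j ∈ univ.erase i with 1 - cos (α j - α i) = v,
      m j * (1 - cos (α j - α i)) = ∑ j ∈ univ.erase i' with 1 - cos (α j - α i') = v,
        m j * (1 - cos (α j - α i')))
    (htan : ∀ v, 0 < v → ∀ i i', ∑ j ∈ univ.erase i with 1 - cos (α j - α i) = v,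
      m j * sin (α j - α i) = ∑ j ∈ univ.erase i' with 1 - cos (α j - α i') = v,
        m j * sin (α j - α i'))
    {d : Angle} (hd : d ≠ 0) (i i' : ι) :
    ∑ j with (α j : Angle) - α i = d, m j = ∑ j with (α j : Angle) - α i' = d, m j := by
  have hv : 0 < 1 - d.cos := by
    have hle : d.cos ≤ 1 := by
      induction d using Angle.induction_on
      rw [Angle.cos_coe]
      exact cos_le_one _
    have hne : d.cos ≠ 1 := by
      rwa [Ne, ← Angle.cos_zero, Angle.cos_eq_iff_eq_or_eq_neg, neg_zero, or_self]
    exact sub_pos.mpr (lt_of_le_of_ne hle hne)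
  have hfiber : ∀ i₁, {j ∈ (univ : Finset ι) | (α j : Angle) - α i₁ = d} =
      {j ∈ univ.erase i₁ | (α j : Angle) - α i₁ = d} :=
    fun i₁ => by rw [filter_erase, erase_eq_of_notMem (by simpa using hd.symm)]
  have hcos : ∀ i₁, {j ∈ univ.erase i₁ | 1 - cos (α j - α i₁) = 1 - d.cos} =
      {j ∈ univ.erase i₁ | ((α j : Angle) - α i₁).cos = d.cos} :=
    fun i₁ => filter_congr fun j _ => by rw [← Angle.coe_sub, Angle.cos_coe, sub_right_inj]
  have hscale : ∀ i₁, ∑ j ∈ univ.erase i₁ with 1 - cos (α j - α i₁) = 1 - d.cos,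
      m j * (1 - cos (α j - α i₁)) =
        (1 - d.cos) * ∑ j ∈ univ.erase i₁ with ((α j : Angle) - α i₁).cos = d.cos, m j := by
    intro i₁
    rw [hcos, mul_sum]
    refine sum_congr rfl fun j hj => ?_
    rw [← (mem_filter.mp hj).2, ← Angle.coe_sub, Angle.cos_coe]
    ring
  have hsin := htan _ hv i i'
  rw [hcos, hcos] at hsin
  simp only [← Angle.sin_coe, Angle.coe_sub] at hsin
  have hm := hrad _ hv i i'
  rw [hscale, hscale] at hm
  rw [hfiber, hfiber]
  exact sum_filter_eq_of_sum_filter_cos_eq (mul_left_cancel₀ hv.ne' hm) hsin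

section Translates

variable {G ι : Type*} [AddCommGroup G] [Fintype ι] {x : ι → G}

theorem exists_sub_eq_sub_of_sum_filter_eq [DecidableEq G] {m : ι → ℝ} (hm : ∀ i, 0 < m i)
    (hP : ∀ d ≠ 0, ∀ i i', ∑ j with x j - x i = d, m j = ∑ j with x j - x i' = d, m j)
    (i j k : ι) : ∃ l, x l - x k = x j - x i := by
  by_cases hij : x j - x i = 0
  · exact ⟨k, by rw [hij, sub_self]⟩
  · have hfiber : 0 < ∑ l with x l - x i = x j - x i, m l :=
      sum_pos (fun l _ => hm l) ⟨j, mem_filter.mpr ⟨mem_univ j, rfl⟩⟩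
    rw [hP _ hij i k] at hfiber
    obtain ⟨l, hl⟩ := nonempty_of_sum_ne_zero hfiber.ne'
    exact ⟨l, (mem_filter.mp hl).2⟩

theorem eq_of_sum_filter_eq [DecidableEq G] (hx : Function.Injective x) {m : ι → ℝ}
    (hm : ∀ i, 0 < m i)
    (hP : ∀ d ≠ 0, ∀ i i', ∑ j with x j - x i = d, m j = ∑ j with x j - x i' = d, m j)
    (i j : ι) : m i = m j := by
  by_cases hij : i = j
  · rw [hij]
  have hd : x j - x i ≠ 0 := sub_ne_zero.mpr (hx.ne (Ne.symm hij))
  have hsingle : ∀ a b, ∑ l with x l - x b = x a - x b, m l = m a := fun a b => by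
    classical
    rw [filter_congr fun l _ => by rw [sub_left_inj, hx.eq_iff], filter_eq' univ a,
      if_pos (mem_univ a), sum_singleton]
  obtain ⟨b, hb⟩ := exists_sub_eq_sub_of_sum_filter_eq hm hP j i i
  have := hP _ hd i b
  have hb' : x j - x i = x i - x b := by rw [← neg_sub (x b), hb, neg_sub]
  rw [hsingle, hb', hsingle] at this
  exact this.symm

theorem card_nsmul_sub_eq_zero (hx : Function.Injective x)
    (hclosed : ∀ i j k, ∃ l, x l - x k = x j - x i) (i j : ι) :
    Fintype.card ι • (x j - x i) = 0 := by
  let H : AddSubgroup G := AddSubgroup.ofSub (Set.range fun l => x l - x i) ⟨x i - x i, i, rfl⟩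
    (by
      rintro _ ⟨a, rfl⟩ _ ⟨b, rfl⟩
      obtain ⟨l, hl⟩ := hclosed b a i
      exact ⟨l, by dsimp only; rw [hl]; abel⟩)
  have hcard : Nat.card H = Fintype.card ι := by
    rw [← Nat.card_eq_fintype_card]
    exact Nat.card_range_of_injective fun a b h => hx (sub_left_injective h)
  have := congrArg Subtype.val (card_nsmul_eq_zero' (G := H) (x := ⟨x j - x i, j, rfl⟩))
  rwa [hcard] at this

end Translates

theorem injective_coe_angle_comp {ι : Type*} {α : ι → ℝ} (hα : Function.Injective α)
    (h0 : ∀ i, 0 ≤ α i) (h2π : ∀ i, α i < 2 * π) :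
    Function.Injective fun i => (α i : Angle) := by
  have : Fact (0 < 2 * π) := ⟨two_pi_pos⟩
  intro i j hij
  exact hα ((AddCircle.coe_eq_coe_iff_of_mem_Ico (a := 0) ⟨h0 i, by simpa using h2π i⟩
    ⟨h0 j, by simpa using h2π j⟩).mp hij)

theorem sub_eq_two_pi_div_mul_of_nsmul_eq_zero {n : ℕ} {α : Fin n → ℝ} (hα : StrictMono α)
    (h0 : ∀ i, 0 ≤ α i) (h2π : ∀ i, α i < 2 * π)
    (hnsmul : ∀ i j, n • ((α j : Angle) - α i) = 0) (i j : Fin n) :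
    α j - α i = (2 * π / n) * (((j : ℕ) : ℝ) - ((i : ℕ) : ℝ)) := by
  have : Fact (0 < 2 * π) := ⟨two_pi_pos⟩
  have hn : 0 < n := i.pos
  set i₀ : Fin n := ⟨0, hn⟩
  have hk : ∀ j, ∃ k < n, (k : ℝ) / n * (2 * π) = α j - α i₀ := by
    intro j
    obtain ⟨k, hk, hkj⟩ := (AddCircle.nsmul_eq_zero_iff hn).mp (hnsmul i₀ j)
    refine ⟨k, hk, (AddCircle.coe_eq_coe_iff_of_mem_Ico (a := 0) ?_ ?_).mp
      (hkj.trans (Angle.coe_sub _ _).symm)⟩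
    · have : (k : ℝ) / n < 1 := (div_lt_one (by exact_mod_cast hn)).mpr (by exact_mod_cast hk)
      have : 0 ≤ (k : ℝ) / n := by positivity
      constructor <;> nlinarith [two_pi_pos]
    · have := hα.monotone (show i₀ ≤ j from Nat.zero_le _)
      constructor <;> linarith [h2π j, h0 i₀]
  choose k hkn hk using hk
  have hkmono : StrictMono fun j => (⟨k j, hkn j⟩ : Fin n) := by
    intro a b hab
    have h := hα hab
    rw [← sub_lt_sub_iff_right (α i₀), ← hk, ← hk,
      mul_lt_mul_iff_of_pos_right two_pi_pos,
      div_lt_div_iff_of_pos_right (by exact_mod_cast hn)] at h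
    exact_mod_cast h
  have hkj : ∀ j, (k j : ℝ) = j := fun j => by
    exact_mod_cast congrArg Fin.val (hkmono.apply_eq (x := j))
  rw [← sub_sub_sub_cancel_right (α j) (α i) (α i₀), ← hk, ← hk, hkj, hkj]
  ring

section Polar

variable {r θ : ℝ → ℝ}

theorem deriv_mul_cos_add (hr : Differentiable ℝ r) (hθ : Differentiable ℝ θ) (a : ℝ) :
    deriv (fun s => r s * cos (θ s + a)) =
      fun t => deriv r t * cos (θ t + a) - r t * sin (θ t + a) * deriv θ t := by
  funext t
  rw [((hr t).hasDerivAt.fun_mul ((hθ t).hasDerivAt.add_const a).cos).deriv]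
  ring

theorem deriv_mul_sin_add (hr : Differentiable ℝ r) (hθ : Differentiable ℝ θ) (a : ℝ) :
    deriv (fun s => r s * sin (θ s + a)) =
      fun t => deriv r t * sin (θ t + a) + r t * cos (θ t + a) * deriv θ t := by
  funext t
  rw [((hr t).hasDerivAt.fun_mul ((hθ t).hasDerivAt.add_const a).sin).deriv]
  ring

theorem deriv_deriv_mul_cos_add (hr : Differentiable ℝ r) (hr' : Differentiable ℝ (deriv r))
    (hθ : Differentiable ℝ θ) (hθ' : Differentiable ℝ (deriv θ)) (a t : ℝ) :
    deriv (deriv fun s => r s * cos (θ s + a)) t =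
      deriv (deriv r) t * cos (θ t + a) - 2 * deriv r t * sin (θ t + a) * deriv θ t
        - r t * cos (θ t + a) * deriv θ t ^ 2 - r t * sin (θ t + a) * deriv (deriv θ) t := by
  have hφ := (hθ t).hasDerivAt.add_const a
  rw [deriv_mul_cos_add hr hθ, (((hr' t).hasDerivAt.fun_mul hφ.cos).fun_sub
    (((hr t).hasDerivAt.fun_mul hφ.sin).fun_mul (hθ' t).hasDerivAt)).deriv]
  ring

theorem deriv_deriv_mul_sin_add (hr : Differentiable ℝ r) (hr' : Differentiable ℝ (deriv r))
    (hθ : Differentiable ℝ θ) (hθ' : Differentiable ℝ (deriv θ)) (a t : ℝ) :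
    deriv (deriv fun s => r s * sin (θ s + a)) t =
      deriv (deriv r) t * sin (θ t + a) + 2 * deriv r t * cos (θ t + a) * deriv θ t
        - r t * sin (θ t + a) * deriv θ t ^ 2 + r t * cos (θ t + a) * deriv (deriv θ) t := by
  have hφ := (hθ t).hasDerivAt.add_const a
  rw [deriv_mul_sin_add hr hθ, (((hr' t).hasDerivAt.fun_mul hφ.sin).fun_add
    (((hr t).hasDerivAt.fun_mul hφ.cos).fun_mul (hθ' t).hasDerivAt)).deriv]
  ring

end Polar

theorem radial_tangential_of_planar_eom {ι : Type*} {A : Finset ι} {m ψ l d : ι → ℝ}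
    {R R' R'' Θ' Θ'' φ F : ℝ}
    (hx : R'' * cos φ - 2 * R' * sin φ * Θ' - R * cos φ * Θ' ^ 2 - R * sin φ * Θ'' =
      (∑ j ∈ A, m j * (R * cos (ψ j) - l j * (R * cos φ)) / d j) - F * (R * cos φ))
    (hy : R'' * sin φ + 2 * R' * cos φ * Θ' - R * sin φ * Θ' ^ 2 + R * cos φ * Θ'' =
      (∑ j ∈ A, m j * (R * sin (ψ j) - l j * (R * sin φ)) / d j) - F * (R * sin φ)) :
    R'' - R * Θ' ^ 2 + F * R = ∑ j ∈ A, m j * (R * (cos (ψ j - φ) - l j)) / d j ∧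
      2 * R' * Θ' + R * Θ'' = ∑ j ∈ A, m j * (R * sin (ψ j - φ)) / d j := by
  have hφ := sin_sq_add_cos_sq φ
  have hrad : cos φ * (∑ j ∈ A, m j * (R * cos (ψ j) - l j * (R * cos φ)) / d j) +
      sin φ * (∑ j ∈ A, m j * (R * sin (ψ j) - l j * (R * sin φ)) / d j) =
        ∑ j ∈ A, m j * (R * (cos (ψ j - φ) - l j)) / d j := by
    rw [mul_sum, mul_sum, ← sum_add_distrib]
    refine sum_congr rfl fun j _ => ?_
    rw [cos_sub]
    linear_combination -(m j * R * l j / d j) * hφ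
  have htan : cos φ * (∑ j ∈ A, m j * (R * sin (ψ j) - l j * (R * sin φ)) / d j) -
      sin φ * (∑ j ∈ A, m j * (R * cos (ψ j) - l j * (R * cos φ)) / d j) =
        ∑ j ∈ A, m j * (R * sin (ψ j - φ)) / d j := by
    rw [mul_sum, mul_sum, ← sum_sub_distrib]
    refine sum_congr rfl fun j _ => ?_
    rw [sin_sub]
    ring
  constructor
  · linear_combination cos φ * hx + sin φ * hy + hrad - (R'' - R * Θ' ^ 2 + F * R) * hφ
  · linear_combination cos φ * hy - sin φ * hx + htan - (2 * R' * Θ' + R * Θ'') * hφ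

theorem sq_mul_div_rpow_three_halves {σ R u : ℝ} (hσ : σ ^ 2 = 1) (hR : 0 < R) (hu : 0 < u)
    (hW : 0 < 2 - R ^ 2 * (σ * u)) (x : ℝ) :
    R ^ 2 * (R * x / (σ - σ * (σ - R ^ 2 * u) ^ 2) ^ ((3 : ℝ) / 2)) =
      x * u ^ (-((3 : ℝ) / 2)) * (2 - R ^ 2 * (σ * u)) ^ (-((3 : ℝ) / 2)) := by
  have hR3 : (R ^ 2) ^ ((3 : ℝ) / 2) = R ^ 3 := by
    rw [← rpow_natCast_mul hR.le]; norm_num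
  rw [show σ - σ * (σ - R ^ 2 * u) ^ 2 = R ^ 2 * (u * (2 - R ^ 2 * (σ * u))) by
      linear_combination (2 * R ^ 2 * u - σ) * hσ,
    mul_rpow (by positivity) (by positivity), mul_rpow hu.le hW.le, hR3, rpow_neg hu.le,
    rpow_neg hW.le]
  have := rpow_pos_of_pos hu ((3 : ℝ) / 2)
  have := rpow_pos_of_pos hW ((3 : ℝ) / 2)
  field_simp

section Rotopulsator

variable {ι : Type*}

noncomputable def rotopulsator (r θ z₁ z₂ : ℝ → ℝ) (α : ι → ℝ) (i : ι) (t : ℝ) : Fin 4 → ℝ :=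
  ![r t * cos (θ t + α i), r t * sin (θ t + α i), z₁ t, z₂ t]

def CurvedNBodyEquations [Fintype ι] [DecidableEq ι] (σ : ℝ) (m : ι → ℝ)
    (q : ι → ℝ → Fin 4 → ℝ) : Prop :=
  ∀ i t k, deriv (deriv fun s => q i s k) t =
    (∑ j ∈ univ.erase i, m j * (q j t k - σ * odot σ (q i t) (q j t) * q i t k) /
      (σ - σ * (odot σ (q i t) (q j t)) ^ 2) ^ ((3 : ℝ) / 2))
    - σ * odot σ (fun l => deriv (fun s => q i s l) t) (fun l => deriv (fun s => q i s l) t) *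
      q i t k

/-- With `u_j = 1 - cos (α_j - α_i)`, the denominator `σ - σ (q_i ⊙ q_j)²` in the equations of
motion of a rotopulsator factors as `r² u_j (2 - r² σ u_j)`; this is the resulting attraction sum on
body `i` at `ξ = r²`, each term weighted by `f` of the angular offset `α_j - α_i`. -/
noncomputable def interactionSum [Fintype ι] [DecidableEq ι] (σ ξ : ℝ) (m α : ι → ℝ)
    (f : ℝ → ℝ) (i : ι) : ℝ :=
  ∑ j ∈ univ.erase i, m j * f (α j - α i) * (1 - cos (α j - α i)) ^ (-((3 : ℝ) / 2)) *
    (2 - ξ * (σ * (1 - cos (α j - α i)))) ^ (-((3 : ℝ) / 2))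

variable {σ : ℝ} {r θ z₁ z₂ : ℝ → ℝ} {α : ι → ℝ}

theorem odot_rotopulsator (i j : ι) (t : ℝ) :
    odot σ (rotopulsator r θ z₁ z₂ α i t) (rotopulsator r θ z₁ z₂ α j t) =
      r t ^ 2 * cos (α j - α i) + z₁ t ^ 2 + σ * z₂ t ^ 2 := by
  simp only [odot, rotopulsator, Matrix.cons_val]
  rw [show α j - α i = (θ t + α j) - (θ t + α i) by ring, cos_sub]
  ring

theorem odot_rotopulsator_of_sphere {i : ι} {t : ℝ}
    (hsphere : odot σ (rotopulsator r θ z₁ z₂ α i t) (rotopulsator r θ z₁ z₂ α i t) = σ)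
    (j : ι) :
    odot σ (rotopulsator r θ z₁ z₂ α i t) (rotopulsator r θ z₁ z₂ α j t) =
      σ - r t ^ 2 * (1 - cos (α j - α i)) := by
  rw [odot_rotopulsator] at hsphere ⊢
  rw [sub_self, cos_zero] at hsphere
  linarith

theorem rotopulsator_sep_pos {i j : ι} {t : ℝ} (hσ : σ ^ 2 = 1)
    (hsphere : odot σ (rotopulsator r θ z₁ z₂ α i t) (rotopulsator r θ z₁ z₂ α i t) = σ)
    (hsep : 0 < σ - σ * odot σ (rotopulsator r θ z₁ z₂ α i t) (rotopulsator r θ z₁ z₂ α j t) ^ 2) :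
    0 < 1 - cos (α j - α i) ∧ 0 < 2 - r t ^ 2 * (σ * (1 - cos (α j - α i))) := by
  set u := 1 - cos (α j - α i)
  rw [odot_rotopulsator_of_sphere hsphere,
    show σ - σ * (σ - r t ^ 2 * u) ^ 2 = (r t ^ 2 * u) * (2 - r t ^ 2 * (σ * u)) by
      linear_combination (2 * r t ^ 2 * u - σ) * hσ] at hsep
  have hu : 0 ≤ u := sub_nonneg.mpr (cos_le_one _)
  have hu' : u ≠ 0 := by rintro hu0; simp [hu0] at hsep
  exact ⟨lt_of_le_of_ne hu (Ne.symm hu'), pos_of_mul_pos_right hsep (by positivity)⟩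

theorem odot_deriv_rotopulsator (hr : Differentiable ℝ r) (hθ : Differentiable ℝ θ) (i : ι)
    (t : ℝ) :
    odot σ (fun l => deriv (fun s => rotopulsator r θ z₁ z₂ α i s l) t)
        (fun l => deriv (fun s => rotopulsator r θ z₁ z₂ α i s l) t) =
      deriv r t ^ 2 + r t ^ 2 * deriv θ t ^ 2 + deriv z₁ t ^ 2 + σ * deriv z₂ t ^ 2 := by
  simp only [odot, rotopulsator, Matrix.cons_val]
  rw [deriv_mul_cos_add hr hθ, deriv_mul_sin_add hr hθ]
  linear_combination (deriv r t ^ 2 + r t ^ 2 * deriv θ t ^ 2) * sin_sq_add_cos_sq (θ t + α i)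

variable [Fintype ι] [DecidableEq ι]

theorem CurvedNBodyEquations.rotopulsator_radial_tangential {m : ι → ℝ}
    (heom : CurvedNBodyEquations σ m (rotopulsator r θ z₁ z₂ α)) (hσ : σ ^ 2 = 1)
    (hrpos : ∀ t, 0 < r t) (hr : Differentiable ℝ r) (hr' : Differentiable ℝ (deriv r))
    (hθ : Differentiable ℝ θ) (hθ' : Differentiable ℝ (deriv θ))
    (hsphere : ∀ i t,
      odot σ (rotopulsator r θ z₁ z₂ α i t) (rotopulsator r θ z₁ z₂ α i t) = σ)
    (hsep : ∀ i j, i ≠ j → ∀ t,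
      0 < σ - σ * odot σ (rotopulsator r θ z₁ z₂ α i t) (rotopulsator r θ z₁ z₂ α j t) ^ 2)
    (i : ι) (t : ℝ) :
    r t ^ 2 * (deriv (deriv r) t - r t * deriv θ t ^ 2 + σ * (deriv r t ^ 2 +
        r t ^ 2 * deriv θ t ^ 2 + deriv z₁ t ^ 2 + σ * deriv z₂ t ^ 2) * r t) =
      (σ * r t ^ 2 - 1) * interactionSum σ (r t ^ 2) m α (fun a => 1 - cos a) i ∧
    r t ^ 2 * (2 * deriv r t * deriv θ t + r t * deriv (deriv θ) t) =
      interactionSum σ (r t ^ 2) m α sin i := by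
  have hx := heom i t 0
  have hy := heom i t 1
  simp only [odot_rotopulsator_of_sphere (hsphere i t), odot_deriv_rotopulsator hr hθ] at hx hy
  simp only [rotopulsator, Matrix.cons_val] at hx hy
  rw [deriv_deriv_mul_cos_add hr hr' hθ hθ'] at hx
  rw [deriv_deriv_mul_sin_add hr hr' hθ hθ'] at hy
  obtain ⟨hrad, htan⟩ := radial_tangential_of_planar_eom hx hy
  simp only [add_sub_add_left_eq_sub] at hrad htan
  have hterm : ∀ j ∈ univ.erase i, ∀ x : ℝ, r t ^ 2 * (m j * (r t * x) /
      (σ - σ * (σ - r t ^ 2 * (1 - cos (α j - α i))) ^ 2) ^ ((3 : ℝ) / 2)) =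
        m j * x * (1 - cos (α j - α i)) ^ (-((3 : ℝ) / 2)) *
          (2 - r t ^ 2 * (σ * (1 - cos (α j - α i)))) ^ (-((3 : ℝ) / 2)) := by
    intro j hj x
    obtain ⟨hu, hW⟩ := rotopulsator_sep_pos hσ (hsphere i t) (hsep i j (ne_of_mem_erase hj).symm t)
    rw [← sq_mul_div_rpow_three_halves hσ (hrpos t) hu hW]
    ring
  constructor
  · rw [hrad, mul_sum, interactionSum, mul_sum]
    refine sum_congr rfl fun j hj => ?_
    rw [hterm j hj]
    linear_combination (-(m j) * (1 - cos (α j - α i)) ^ (-((3 : ℝ) / 2)) *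
      (2 - r t ^ 2 * (σ * (1 - cos (α j - α i)))) ^ (-((3 : ℝ) / 2))) * hσ
  · rw [htan, mul_sum, interactionSum]
    exact sum_congr rfl fun j hj => hterm j hj _

theorem sum_filter_eq_of_interactionSum_eq (hσ : σ ≠ 0) (m : ι → ℝ) (f : ℝ → ℝ)
    {s : Set ℝ} (hs : IsOpen s) (hne : s.Nonempty)
    (hW : ∀ ξ ∈ s, ∀ i j, i ≠ j → 0 < 2 - ξ * (σ * (1 - cos (α j - α i))))
    (heq : ∀ ξ ∈ s, ∀ i i', interactionSum σ ξ m α f i = interactionSum σ ξ m α f i')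
    {v : ℝ} (hv : 0 < v) (i i' : ι) :
    ∑ j ∈ univ.erase i with 1 - cos (α j - α i) = v, m j * f (α j - α i) =
      ∑ j ∈ univ.erase i' with 1 - cos (α j - α i') = v, m j * f (α j - α i') := by
  have hpos : ∀ i₁, ∀ j ∈ univ.erase i₁, ∀ ξ ∈ s, 0 < 2 - ξ * (σ * (1 - cos (α j - α i₁))) :=
    fun i₁ j hj ξ hξ => hW ξ hξ i₁ j (ne_of_mem_erase hj).symm
  have h := sum_filter_eq_of_sum_mul_sub_mul_rpow_neg_eq hs hne two_ne_zero
    (by norm_num : (0 : ℝ) < 3 / 2) (univ.erase i) (univ.erase i')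
    _ _ (fun j => m j * f (α j - α i) * (1 - cos (α j - α i)) ^ (-((3 : ℝ) / 2)))
    (fun j => m j * f (α j - α i') * (1 - cos (α j - α i')) ^ (-((3 : ℝ) / 2)))
    (hpos i) (hpos i') (fun ξ hξ => heq ξ hξ i i') (σ * v)
  have hfiber : ∀ i₁, ∑ j ∈ univ.erase i₁ with σ * (1 - cos (α j - α i₁)) = σ * v,
      m j * f (α j - α i₁) * (1 - cos (α j - α i₁)) ^ (-((3 : ℝ) / 2)) =
        (∑ j ∈ univ.erase i₁ with 1 - cos (α j - α i₁) = v, m j * f (α j - α i₁)) *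
          v ^ (-((3 : ℝ) / 2)) := by
    intro i₁
    simp only [mul_right_inj' hσ, sum_mul]
    exact sum_congr rfl fun j hj => by rw [(mem_filter.mp hj).2]
  rw [hfiber, hfiber] at h
  exact mul_right_cancel₀ (rpow_pos_of_pos hv _).ne' h

open scoped Classical in
theorem CurvedNBodyEquations.sum_filter_coe_sub_eq_of_rotopulsator {m : ι → ℝ}
    (heom : CurvedNBodyEquations σ m (rotopulsator r θ z₁ z₂ α)) (hσ : σ ^ 2 = 1)
    (hrpos : ∀ t, 0 < r t) (hr : Differentiable ℝ r) (hr' : Differentiable ℝ (deriv r))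
    (hθ : Differentiable ℝ θ) (hθ' : Differentiable ℝ (deriv θ))
    (hsphere : ∀ i t,
      odot σ (rotopulsator r θ z₁ z₂ α i t) (rotopulsator r θ z₁ z₂ α i t) = σ)
    (hsep : ∀ i j, i ≠ j → ∀ t,
      0 < σ - σ * odot σ (rotopulsator r θ z₁ z₂ α i t) (rotopulsator r θ z₁ z₂ α j t) ^ 2)
    {t₀ t₁ : ℝ} (hr₀₁ : r t₀ ≠ r t₁) {d : Angle} (hd : d ≠ 0) (i i' : ι) :
    ∑ j with (α j : Angle) - α i = d, m j = ∑ j with (α j : Angle) - α i' = d, m j := by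
  have hdyn := heom.rotopulsator_radial_tangential hσ hrpos hr hr' hθ hθ' hsphere hsep
  have hr₀₁' : r t₀ ^ 2 ≠ r t₁ ^ 2 := fun h =>
    hr₀₁ ((pow_left_inj₀ (hrpos t₀).le (hrpos t₁).le two_ne_zero).mp h)
  -- the radial identity carries the factor `σ r² - 1`, so it is used only where `r² ≠ σ`
  obtain ⟨a, b, hab, hrange, hσab⟩ := exists_Ioo_subset_range_notMem (hr.continuous.pow 2) hr₀₁' σ
  have hσ0 : σ ≠ 0 := by rintro rfl; norm_num at hσ
  have hfibers : ∀ f, (∀ t, r t ^ 2 ≠ σ → ∀ i i',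
      interactionSum σ (r t ^ 2) m α f i = interactionSum σ (r t ^ 2) m α f i') →
      ∀ v, 0 < v → ∀ i i', ∑ j ∈ univ.erase i with 1 - cos (α j - α i) = v,
        m j * f (α j - α i) = ∑ j ∈ univ.erase i' with 1 - cos (α j - α i') = v,
          m j * f (α j - α i') := by
    intro f hf v hv
    refine sum_filter_eq_of_interactionSum_eq hσ0 m f isOpen_Ioo (Set.nonempty_Ioo.mpr hab)
      ?_ ?_ hv
    · rintro _ hξ i j hij
      obtain ⟨t, rfl⟩ := hrange hξ
      exact (rotopulsator_sep_pos hσ (hsphere i t) (hsep i j hij t)).2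
    · rintro _ hξ i i'
      obtain ⟨t, rfl⟩ := hrange hξ
      exact hf t (fun h => hσab (h ▸ hξ)) i i'
  exact sum_filter_coe_sub_eq_of_sum_filter_cos_eq
    (hfibers _ fun t ht i i' => mul_left_cancel₀
      (fun h => ht (by linear_combination σ * h - r t ^ 2 * hσ))
      ((hdyn i t).1.symm.trans (hdyn i' t).1))
    (hfibers _ fun t _ i i' => (hdyn i t).2.symm.trans (hdyn i' t).2) hd i i'

end Rotopulsator

theorem elliptic_rotopulsator_nonconstant_size_regular_polygon_equal_masses
    (σ : ℝ) (hσ : σ = 1 ∨ σ = -1) (n : ℕ)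
    (q : Fin n → ℝ → Fin 4 → ℝ) (m : Fin n → ℝ)
    (hm : ∀ i, 0 < m i)
    -- the bodies move on `M³_σ`
    (hsphere : ∀ i t, odot σ (q i t) (q i t) = σ)
    -- singularity avoidance: `σ - σ(q_i ⊙ q_j)² > 0` for `i ≠ j`
    (hsep : ∀ i j, i ≠ j → ∀ t, 0 < σ - σ * (odot σ (q i t) (q j t)) ^ 2)
    -- the equations of motion of the curved n-body problem
    (heom : ∀ i t k,
      deriv (deriv fun s => q i s k) t =
        (∑ j ∈ Finset.univ.erase i,
          m j * (q j t k - σ * odot σ (q i t) (q j t) * q i t k) /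
            (σ - σ * (odot σ (q i t) (q j t)) ^ 2) ^ ((3 : ℝ) / 2))
        - σ * odot σ (fun l => deriv (fun s => q i s l) t)
            (fun l => deriv (fun s => q i s l) t) * q i t k)
    -- elliptic rotopulsator structure with common size function `r`
    (r θ z₁ z₂ : ℝ → ℝ) (hrpos : ∀ t, 0 < r t)
    (hr1 : Differentiable ℝ r) (hr2 : Differentiable ℝ (deriv r))
    (hθ1 : Differentiable ℝ θ) (hθ2 : Differentiable ℝ (deriv θ))
    (α : Fin n → ℝ) (hα0 : ∀ i, 0 ≤ α i) (hα2π : ∀ i, α i < 2 * π)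
    (hαmono : StrictMono α)
    (hrep : ∀ i t, q i t 0 = r t * Real.cos (θ t + α i) ∧
                   q i t 1 = r t * Real.sin (θ t + α i) ∧
                   q i t 2 = z₁ t ∧ q i t 3 = z₂ t)
    -- the size `r` is not constant
    (hrnc : ¬ ∃ c : ℝ, ∀ t, r t = c) :
    (∀ i j : Fin n, α j - α i = (2 * π / n) * (((j : ℕ) : ℝ) - ((i : ℕ) : ℝ))) ∧
    (∀ i j : Fin n, m i = m j) := by
  classical
  have hσ2 : σ ^ 2 = 1 := by rcases hσ with rfl | rfl <;> norm_num
  obtain rfl : q = rotopulsator r θ z₁ z₂ α := by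
    funext i t k
    obtain ⟨h0, h1, h2, h3⟩ := hrep i t
    fin_cases k <;> simp [rotopulsator, h0, h1, h2, h3]
  obtain ⟨t, ht⟩ := not_forall.mp (not_exists.mp hrnc (r 0))
  have hP := fun d (hd : d ≠ 0) => CurvedNBodyEquations.sum_filter_coe_sub_eq_of_rotopulsator
    heom hσ2 hrpos hr1 hr2 hθ1 hθ2 hsphere hsep ht hd
  have hinj := injective_coe_angle_comp hαmono.injective hα0 hα2π
  refine ⟨sub_eq_two_pi_div_mul_of_nsmul_eq_zero hαmono hα0 hα2π fun i j => ?_,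
    eq_of_sum_filter_eq hinj hm hP⟩
  simpa using card_nsmul_sub_eq_zero hinj (exists_sub_eq_sub_of_sum_filter_eq hm hP) i j
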